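/- arXiv:0807.1644 — 6 statements merged into one kernel-verified Lean document; each statement's English description precedes it below -/
import Mathlib

section
/- Let E₁ and E₂ be complex Banach spaces with open unit balls B₁ and B₂, and let f : B₁ → B₂ be a holomorphic map with f(0) = 0 such that the derivative f'(0) is an isometry (‖f'(0)·x‖ = ‖x‖ for all x ∈ E₁). If there exists a continuous linear projection π : E₂ → E₂ with π ∘ π = π, range π = f'(0)(E₁), and ‖π‖ = 1, then f is injective on B₁ and is a biholomorphism of B₁ onto its image f(B₁); that is, f is injective on B₁ and there is a holomorphic map g defined on a neighbourhood of f(B₁) in f(B₁) with g(f(x)) = x for all x ∈ B₁. -/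
/-!
Let `T = f'(0)`. Since `π` has norm one and range `T(E₁)`, `G = T⁻¹ ∘ π` is a linear map of norm
at most one with `G ∘ T = id`, so `G ∘ f` is a holomorphic self-map of `B₁` fixing `0` with
derivative the identity there. By Cartan's uniqueness theorem such a map is the identity, so `G`
is a holomorphic left inverse of `f` on `B₁`.

Cartan's theorem: if the Taylor series `p` of the self-map at `0` agrees with the identity below
some degree `k ≥ 2`, then the degree-`k` part of the `n`-th iterate is `n • p k`. Cauchy's
estimate on complex lines through `0` bounds every homogeneous part of a self-map of the ball by
`1` on the ball, so `p k = 0`.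
-/

open Set Metric Filter Function
open scoped Topology NNReal

lemma Composition.exists_two_le_blocksFun {m : ℕ} {c : Composition m}
    (hc : c ≠ Composition.ones m) : ∃ i, 2 ≤ c.blocksFun i := by
  obtain ⟨k, hk, hk1⟩ := Composition.ne_ones_iff.1 hc
  obtain ⟨i, rfl⟩ := List.mem_iff_get.1 hk
  exact ⟨i, hk1⟩

namespace FormalMultilinearSeries

variable {𝕜 E F G : Type*} [NontriviallyNormedField 𝕜]
  [NormedAddCommGroup E] [NormedSpace 𝕜 E] [NormedAddCommGroup F] [NormedSpace 𝕜 F]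
  [NormedAddCommGroup G] [NormedSpace 𝕜 G]

section Composition

variable (p : FormalMultilinearSeries 𝕜 F G) (q : FormalMultilinearSeries 𝕜 E F) (x : E)

lemma comp_apply_const (m : ℕ) :
    (p.comp q) m (fun _ => x) = ∑ c : Composition m, p.compAlongComposition q c (fun _ => x) :=
  sum_apply _ _ _

lemma compAlongComposition_apply_const_eq_zero {m : ℕ} (c : Composition m) (i : Fin c.length)
    (h : q (c.blocksFun i) (fun _ => x) = 0) :
    p.compAlongComposition q c (fun _ => x) = 0 := by
  rw [compAlongComposition_apply]
  exact ContinuousMultilinearMap.map_coord_zero _ i h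

lemma compAlongComposition_ones_apply_const (m : ℕ) :
    p.compAlongComposition q (Composition.ones m) (fun _ => x) =
      p m (fun _ => q 1 (fun _ => x)) := by
  rw [compAlongComposition_apply, applyComposition_ones]
  exact p.congr (Composition.ones_length m) fun _ _ _ => rfl

lemma compAlongComposition_single_apply_const {m : ℕ} (hm : 0 < m) :
    p.compAlongComposition q (Composition.single m hm) (fun _ => x) =
      p 1 (fun _ => q m (fun _ => x)) := by
  rw [compAlongComposition_apply, applyComposition_single q hm]
  exact p.congr (Composition.single_length hm) fun _ _ _ => rfl

end Composition

/-- Only the diagonal values `p j (fun _ => x)` are compared: they are all that `p.sum` sees. -/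
def AgreesWithIdBelow (p : FormalMultilinearSeries 𝕜 E E) (k : ℕ) : Prop :=
  (∀ y, p 1 (fun _ => y) = y) ∧ ∀ j, 2 ≤ j → j < k → ∀ x, p j (fun _ => x) = 0

namespace AgreesWithIdBelow

variable {p q : FormalMultilinearSeries 𝕜 E E} {k : ℕ}

lemma compAlongComposition_apply_const_eq_zero (hq : q.AgreesWithIdBelow k) {m : ℕ}
    {c : Composition m} (hc : c ≠ Composition.ones m) (hlt : ∀ i, c.blocksFun i < k) (x : E) :
    p.compAlongComposition q c (fun _ => x) = 0 := by
  obtain ⟨i, hi⟩ := c.exists_two_le_blocksFun hc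
  exact p.compAlongComposition_apply_const_eq_zero q x c i (hq.2 _ hi (hlt i) x)

lemma comp (hp : p.AgreesWithIdBelow k) (hq : q.AgreesWithIdBelow k) :
    (p.comp q).AgreesWithIdBelow k := by
  refine ⟨fun y => by simp only [comp_coeff_one, hq.1, hp.1], fun j hj hjk x => ?_⟩
  rw [comp_apply_const]
  refine Finset.sum_eq_zero fun c _ => ?_
  by_cases hc : c = Composition.ones j
  · rw [hc, compAlongComposition_ones_apply_const, hq.1, hp.2 j hj hjk]
  · exact hq.compAlongComposition_apply_const_eq_zero hc
      (fun i => (c.blocksFun_le i).trans_lt hjk) x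

lemma comp_apply_const (hp : p.AgreesWithIdBelow k) (hq : q.AgreesWithIdBelow k) (hk : 2 ≤ k)
    (x : E) : (p.comp q) k (fun _ => x) = p k (fun _ => x) + q k (fun _ => x) := by
  have hk0 : 0 < k := by omega
  have hsingle : Composition.single k hk0 ≠ Composition.ones k := by
    intro h
    have := congrArg Composition.length h
    rw [Composition.ones_length, Composition.single_length] at this
    omega
  rw [FormalMultilinearSeries.comp_apply_const,
    ← Finset.add_sum_erase _ _ (Finset.mem_univ (Composition.ones k)),
    Finset.sum_eq_single_of_mem _ (Finset.mem_erase.2 ⟨hsingle, Finset.mem_univ _⟩),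
    compAlongComposition_ones_apply_const, compAlongComposition_single_apply_const, hq.1, hp.1]
  intro c hc hcs
  exact hq.compAlongComposition_apply_const_eq_zero (Finset.mem_erase.1 hc).1
    ((Composition.ne_single_iff hk0).1 hcs) x

end AgreesWithIdBelow

lemma agreesWithIdBelow_fpowerSeries_id (k : ℕ) :
    ((ContinuousLinearMap.id 𝕜 E).fpowerSeries 0).AgreesWithIdBelow k := by
  refine ⟨fun y => rfl, fun j hj _ x => ?_⟩
  obtain ⟨i, rfl⟩ := Nat.exists_eq_add_of_le' hj
  rw [ContinuousLinearMap.fpowerSeries_apply_add_two]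
  rfl

end FormalMultilinearSeries

lemma ContinuousMultilinearMap.apply_const_eq_zero_of_forall_mem_ball {𝕜 E F : Type*}
    [NontriviallyNormedField 𝕜] [NormedAddCommGroup E] [NormedSpace 𝕜 E]
    [NormedAddCommGroup F] [NormedSpace 𝕜 F] {k : ℕ}
    (f : ContinuousMultilinearMap 𝕜 (fun _ : Fin k => E) F) {r : ℝ} (hr : 0 < r)
    (h : ∀ x ∈ ball (0 : E) r, f (fun _ => x) = 0) (x : E) : f (fun _ => x) = 0 := by
  rcases eq_or_ne x 0 with rfl | hx
  · exact h 0 (mem_ball_self hr)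
  have hxpos : 0 < ‖x‖ := norm_pos_iff.2 hx
  obtain ⟨c, hc0, hc⟩ := NormedField.exists_norm_lt 𝕜 (div_pos hr hxpos)
  have hcx : c • x ∈ ball (0 : E) r := by
    rw [mem_ball_zero_iff, norm_smul]
    exact (lt_div_iff₀ hxpos).1 hc
  have hscaled := (f.map_smul_univ (fun _ => c) (fun _ => x)).symm.trans (h _ hcx)
  simp only [Finset.prod_const, Finset.card_univ, Fintype.card_fin] at hscaled
  exact (smul_eq_zero.1 hscaled).resolve_left (pow_ne_zero k (norm_pos_iff.1 hc0))

lemma AnalyticOnNhd.iterate {𝕜 E : Type*} [NontriviallyNormedField 𝕜]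
    [NormedAddCommGroup E] [NormedSpace 𝕜 E] {f : E → E} {s : Set E} (hf : AnalyticOnNhd 𝕜 f s)
    (hs : MapsTo f s s) (n : ℕ) : AnalyticOnNhd 𝕜 f^[n] s := by
  induction n with
  | zero => exact analyticOnNhd_id
  | succ n ih =>
    rw [iterate_succ']
    exact hf.comp ih (hs.iterate n)

section Complex

open FormalMultilinearSeries

variable {E F : Type*} [NormedAddCommGroup E] [NormedSpace ℂ E]
  [NormedAddCommGroup F] [NormedSpace ℂ F]

lemma HasFPowerSeriesAt.exists_iterate {f : E → E} {p : FormalMultilinearSeries ℂ E E} {k : ℕ}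
    (hf : HasFPowerSeriesAt f p 0) (hf0 : f 0 = 0) (hp : p.AgreesWithIdBelow k) (hk : 2 ≤ k)
    (n : ℕ) : ∃ q : FormalMultilinearSeries ℂ E E, HasFPowerSeriesAt f^[n] q 0 ∧
      q.AgreesWithIdBelow k ∧ ∀ x, q k (fun _ => x) = n • p k (fun _ => x) := by
  induction n with
  | zero =>
    refine ⟨_, (ContinuousLinearMap.id ℂ E).hasFPowerSeriesAt 0,
      agreesWithIdBelow_fpowerSeries_id k, fun x => ?_⟩
    obtain ⟨i, rfl⟩ := Nat.exists_eq_add_of_le' hk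
    rw [ContinuousLinearMap.fpowerSeries_apply_add_two, zero_smul]
    rfl
  | succ n ih =>
    obtain ⟨q, hq, hqk, hqk'⟩ := ih
    refine ⟨p.comp q, ?_, hp.comp hqk, fun x => ?_⟩
    · rw [iterate_succ']
      exact (iterate_fixed hf0 n ▸ hf).comp hq
    · rw [hp.comp_apply_const hqk hk, hqk', succ_nsmul']

lemma HasFPowerSeriesAt.norm_apply_const_le [CompleteSpace F] {f : E → F}
    {q : FormalMultilinearSeries ℂ E F} {M : ℝ} (hf : HasFPowerSeriesAt f q 0)
    (hd : DifferentiableOn ℂ f (ball 0 1)) (hM : ∀ y ∈ ball (0 : E) 1, ‖f y‖ ≤ M)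
    {x : E} (hx : ‖x‖ < 1) (k : ℕ) : ‖q k (fun _ => x)‖ ≤ M := by
  let L := ContinuousLinearMap.toSpanSingleton ℂ x
  have hL : MapsTo L (closedBall 0 1) (ball 0 1) := fun z hz => by
    rw [mem_closedBall_zero_iff] at hz
    rw [mem_ball_zero_iff, ContinuousLinearMap.toSpanSingleton_apply, norm_smul]
    exact (mul_le_of_le_one_left (norm_nonneg x) hz).trans_lt hx
  have hdL : DifferentiableOn ℂ (f ∘ L) (closedBall 0 ((1 : ℝ≥0) : ℝ)) := by
    rw [NNReal.coe_one]
    exact hd.comp L.differentiableOn hL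
  have hcauchy := hdL.hasFPowerSeriesOnBall one_pos
  have hline : HasFPowerSeriesAt (f ∘ L) (q.compContinuousLinearMap L) 0 :=
    HasFPowerSeriesAt.compContinuousLinearMap (by rwa [map_zero])
  have hcoeff : q k (fun _ => x) = cauchyPowerSeries (f ∘ L) 0 ((1 : ℝ≥0) : ℝ) k (fun _ => 1) := by
    rw [← hline.eq_formalMultilinearSeries hcauchy.hasFPowerSeriesAt,
      compContinuousLinearMap_apply]
    congr 1
    ext
    simp [L]
  rw [hcoeff, NNReal.coe_one, cauchyPowerSeries_apply, ← one_mul M]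
  refine circleIntegral.norm_two_pi_i_inv_smul_integral_le_of_norm_le_const zero_le_one
    fun z hz => ?_
  have hz1 : ‖z‖ = 1 := mem_sphere_zero_iff_norm.1 hz
  simpa [norm_smul, hz1] using hM _ (hL (sphere_subset_closedBall hz))

lemma HasFPowerSeriesAt.apply_const_eq_zero_of_mapsTo_ball [CompleteSpace E] {f : E → E}
    {p : FormalMultilinearSeries ℂ E E} {k : ℕ} (hf : AnalyticOnNhd ℂ f (ball 0 1))
    (hmaps : MapsTo f (ball 0 1) (ball 0 1)) (hf0 : f 0 = 0) (hp : HasFPowerSeriesAt f p 0)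
    (hpk : p.AgreesWithIdBelow k) (hk : 2 ≤ k) (x : E) : p k (fun _ => x) = 0 := by
  refine (p k).apply_const_eq_zero_of_forall_mem_ball one_pos (fun y hy => ?_) x
  have hy : ‖y‖ < 1 := mem_ball_zero_iff.1 hy
  have hbound : ∀ n : ℕ, n * ‖p k (fun _ => y)‖ ≤ 1 := fun n => by
    obtain ⟨q, hq, -, hqk⟩ := hp.exists_iterate hf0 hpk hk n
    have hfn : MapsTo f^[n] (ball 0 1) (ball 0 1) := hmaps.iterate n
    have := hq.norm_apply_const_le (hf.iterate hmaps n).differentiableOn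
      (fun z hz => (mem_ball_zero_iff.1 (hfn hz)).le) hy k
    rwa [hqk, RCLike.norm_nsmul ℂ, nsmul_eq_mul] at this
  by_contra hne
  obtain ⟨n, hn⟩ := exists_nat_gt (‖p k (fun _ => y)‖⁻¹)
  have := (inv_lt_iff_one_lt_mul₀ (norm_pos_iff.2 hne)).1 hn
  linarith [hbound n]

theorem AnalyticOnNhd.eqOn_id_of_mapsTo_ball [CompleteSpace E] {f : E → E}
    (hf : AnalyticOnNhd ℂ f (ball 0 1)) (hmaps : MapsTo f (ball 0 1) (ball 0 1))
    (hf0 : f 0 = 0) (hd : fderiv ℂ f 0 = ContinuousLinearMap.id ℂ E) :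
    EqOn f id (ball 0 1) := by
  obtain ⟨p, hp⟩ := hf 0 (mem_ball_self one_pos)
  have hp1 : ∀ y, p 1 (fun _ => y) = y := fun y => by
    have h := congrArg (· y) hp.fderiv_eq
    simp only [hd, ContinuousLinearMap.id_apply, continuousMultilinearCurryFin1_apply] at h
    refine Eq.trans ?_ h.symm
    congr 1
  have hagree : ∀ k, p.AgreesWithIdBelow k := by
    intro k
    induction k with
    | zero => exact ⟨hp1, fun j _ hj => absurd hj (Nat.not_lt_zero j)⟩
    | succ k ih =>
      refine ⟨hp1, fun j hj hjk x => ?_⟩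
      rcases Nat.lt_succ_iff_lt_or_eq.1 hjk with hjk | rfl
      · exact ih.2 j hj hjk x
      · exact hp.apply_const_eq_zero_of_mapsTo_ball hf hmaps hf0 ih hj x
  obtain ⟨r, hr⟩ := hp
  have hloc : f =ᶠ[𝓝 0] id := by
    filter_upwards [Metric.eball_mem_nhds (0 : E) hr.r_pos] with y hy
    have hsum : HasSum (fun n => p n (fun _ => y)) y := by
      convert hasSum_single 1 fun n hn => ?_
      · exact (hp1 y).symm
      rcases n with _ | _ | n
      · rw [hr.coeff_zero, hf0]
      · exact absurd rfl hn
      · exact (hagree (n + 3)).2 (n + 2) (by omega) (by omega) y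
    simpa using (hr.hasSum hy).unique hsum
  exact hf.eqOn_of_preconnected_of_eventuallyEq analyticOnNhd_id
    (convex_ball 0 1).isPreconnected (mem_ball_self one_pos) hloc

end Complex

lemma ContinuousLinearMap.exists_comp_eq_id_of_isometry {𝕜 E₁ E₂ : Type*}
    [NontriviallyNormedField 𝕜] [NormedAddCommGroup E₁] [NormedSpace 𝕜 E₁]
    [NormedAddCommGroup E₂] [NormedSpace 𝕜 E₂] {T : E₁ →L[𝕜] E₂} (hT : ∀ x, ‖T x‖ = ‖x‖)
    {π : E₂ →L[𝕜] E₂} (hπ : ∀ y, π (π y) = π y) (hrange : range π = range T)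
    (hnorm : ‖π‖ ≤ 1) :
    ∃ G : E₂ →L[𝕜] E₁, G.comp T = ContinuousLinearMap.id 𝕜 E₁ ∧ ∀ y, ‖G y‖ ≤ ‖y‖ := by
  let J : E₁ →ₗᵢ[𝕜] E₂ := ⟨T.toLinearMap, hT⟩
  have hmem : ∀ y, π y ∈ LinearMap.range J.toLinearMap := fun y =>
    LinearMap.mem_range.2 (hrange ▸ mem_range_self y : π y ∈ range T)
  let G : E₂ →L[𝕜] E₁ := (J.equivRange.symm.toContinuousLinearEquiv : _ →L[𝕜] E₁).comp
    (π.codRestrict _ hmem)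
  refine ⟨G, ContinuousLinearMap.ext fun x => ?_, fun y => ?_⟩
  · obtain ⟨z, hz⟩ : T x ∈ range π := hrange ▸ mem_range_self x
    have hfix : π (T x) = T x := by rw [← hz, hπ]
    show J.equivRange.symm ⟨π (T x), hmem (T x)⟩ = x
    rw [J.equivRange.symm_apply_eq]
    exact Subtype.ext hfix
  · show ‖J.equivRange.symm ⟨π y, hmem y⟩‖ ≤ ‖y‖
    rw [LinearIsometryEquiv.norm_map]
    exact π.le_of_opNorm_le hnorm y |>.trans_eq (one_mul _)

theorem stmt0_general
    {E₁ E₂ : Type*} [NormedAddCommGroup E₁] [NormedSpace ℂ E₁] [CompleteSpace E₁]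
    [NormedAddCommGroup E₂] [NormedSpace ℂ E₂]
    (B₁ : Set E₁) (B₂ : Set E₂) (hB₁ : B₁ = Metric.ball 0 1) (hB₂ : B₂ = Metric.ball 0 1)
    (f : E₁ → E₂) (hf : AnalyticOnNhd ℂ f B₁) (hmaps : Set.MapsTo f B₁ B₂)
    (hf0 : f 0 = 0)
    (hisom : ∀ x : E₁, ‖fderiv ℂ f 0 x‖ = ‖x‖)
    (hπ : ∃ π : E₂ →L[ℂ] E₂, (∀ y, π (π y) = π y) ∧
      Set.range π = Set.range (fderiv ℂ f 0) ∧ ‖π‖ = 1) :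
    Set.InjOn f B₁ ∧
      ∃ g : E₂ → E₁, AnalyticOn ℂ g (f '' B₁) ∧ ∀ x ∈ B₁, g (f x) = x := by
  subst hB₁ hB₂
  obtain ⟨π, hπ, hrange, hnorm⟩ := hπ
  obtain ⟨G, hGT, hG⟩ :=
    ContinuousLinearMap.exists_comp_eq_id_of_isometry hisom hπ hrange hnorm.le
  have hGf : EqOn (G ∘ f) id (ball 0 1) := by
    refine AnalyticOnNhd.eqOn_id_of_mapsTo_ball ((G.analyticOnNhd univ).comp hf (mapsTo_univ _ _))
      (fun x hx => mem_ball_zero_iff.2 ((hG _).trans_lt (mem_ball_zero_iff.1 (hmaps hx))))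
      (by simp [hf0]) ?_
    rw [fderiv_comp 0 G.differentiableAt (hf 0 (mem_ball_self one_pos)).differentiableAt,
      G.fderiv, hGT]
  exact ⟨LeftInvOn.injOn hGf, G, G.analyticOn _, hGf⟩

/-- Let `E₁`, `E₂` be complex Banach spaces with open unit balls
`B₁`, `B₂`, and `f : B₁ → B₂` holomorphic with `f 0 = 0` whose derivative at `0` is an
isometry. If there is a continuous linear projection `π` of `E₂` of norm `1` with range
`f'(0)(E₁)`, then `f` is injective on `B₁` and is a biholomorphism of `B₁` onto `f(B₁)`:
there is a map `g`, holomorphic on `f(B₁)` (within `f(B₁)`), with `g (f x) = x` on `B₁`. -/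
theorem stmt0
    {E₁ E₂ : Type*} [NormedAddCommGroup E₁] [NormedSpace ℂ E₁] [CompleteSpace E₁]
    [NormedAddCommGroup E₂] [NormedSpace ℂ E₂] [CompleteSpace E₂]
    (B₁ : Set E₁) (B₂ : Set E₂) (hB₁ : B₁ = Metric.ball 0 1) (hB₂ : B₂ = Metric.ball 0 1)
    (f : E₁ → E₂) (hf : AnalyticOnNhd ℂ f B₁) (hmaps : Set.MapsTo f B₁ B₂)
    (hf0 : f 0 = 0)
    (hisom : ∀ x : E₁, ‖fderiv ℂ f 0 x‖ = ‖x‖)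
    (hπ : ∃ π : E₂ →L[ℂ] E₂, (∀ y, π (π y) = π y) ∧
      Set.range π = Set.range (fderiv ℂ f 0) ∧ ‖π‖ = 1) :
    Set.InjOn f B₁ ∧
      ∃ g : E₂ → E₁, AnalyticOn ℂ g (f '' B₁) ∧ ∀ x ∈ B₁, g (f x) = x :=
  stmt0_general B₁ B₂ hB₁ hB₂ f hf hmaps hf0 hisom hπ
end

section
/- Let B be the open unit ball of ℂ² for the Hermitian (Euclidean) norm and let V = B ∩ {(x, y) ∈ ℂ² : y = x²}. Then V is not a holomorphic retract of B: there is no holomorphic map ρ : B → B with ρ ∘ ρ = ρ on B and ρ(B) = V. -/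
/-!
On `V` we have `|x|² + |x|⁴ < 1`, hence `|x| < 4/5`. If `ρ` were a holomorphic retraction of `B`
onto `V`, then `f = x ∘ ρ` would map `B` into the disc of radius `4/5` with `f(0) = 0`, so by the
Schwarz lemma `‖f'(0)‖ ≤ 4/5`. But `f` is a left inverse of the parabola `t ↦ (t, t²)`, whose
velocity at `0` is the unit vector `e₀`, so `f'(0) e₀ = 1`.
-/

open Metric Set Filter Topology

section Parabola

variable {𝕜 : Type*} [RCLike 𝕜]

lemma EuclideanSpace.norm_sq_eq_fin_two (p : EuclideanSpace 𝕜 (Fin 2)) :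
    ‖p‖ ^ 2 = ‖p 0‖ ^ 2 + ‖p 1‖ ^ 2 := by
  rw [EuclideanSpace.norm_sq_eq, Fin.sum_univ_two]

noncomputable def parabola (t : 𝕜) : EuclideanSpace 𝕜 (Fin 2) :=
  t • EuclideanSpace.single 0 1 + t ^ 2 • EuclideanSpace.single 1 1

@[simp] lemma parabola_apply_zero (t : 𝕜) : parabola t 0 = t := by
  simp [parabola]

@[simp] lemma parabola_apply_one (t : 𝕜) : parabola t 1 = t ^ 2 := by
  simp [parabola]

lemma norm_parabola_lt_one {t : 𝕜} (ht : ‖t‖ < 1 / 2) : ‖parabola t‖ < 1 := by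
  have : ‖parabola t‖ ≤ ‖t‖ + ‖t‖ ^ 2 := (norm_add_le _ _).trans_eq (by simp [norm_smul])
  nlinarith [norm_nonneg t]

lemma hasDerivAt_parabola_zero :
    HasDerivAt parabola (EuclideanSpace.single 0 1 : EuclideanSpace 𝕜 (Fin 2)) 0 :=
  (((hasDerivAt_id (0 : 𝕜)).smul_const (EuclideanSpace.single (0 : Fin 2) (1 : 𝕜))).add
    ((hasDerivAt_pow 2 (0 : 𝕜)).smul_const (EuclideanSpace.single (1 : Fin 2) (1 : 𝕜)))).congr_deriv
    (by simp)

lemma norm_apply_zero_lt_of_apply_one_eq_sq {p : EuclideanSpace 𝕜 (Fin 2)} (hp : ‖p‖ < 1)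
    (hp₁ : p 1 = p 0 ^ 2) : ‖p 0‖ < 4 / 5 := by
  have hsq : ‖p 0‖ ^ 2 + (‖p 0‖ ^ 2) ^ 2 < 1 := by
    have := EuclideanSpace.norm_sq_eq_fin_two p
    rw [hp₁, norm_pow] at this
    nlinarith [norm_nonneg p]
  by_contra! h
  have h2 : 16 / 25 ≤ ‖p 0‖ ^ 2 := by nlinarith [norm_nonneg (p 0)]
  nlinarith

end Parabola

lemma HasFDerivAt.apply_eq_one_of_leftInverse {𝕜 E : Type*} [NontriviallyNormedField 𝕜]
    [NormedAddCommGroup E] [NormedSpace 𝕜 E] {f : E → 𝕜} {L : E →L[𝕜] 𝕜} {c : 𝕜 → E} {v : E}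
    {a : 𝕜} (hf : HasFDerivAt f L (c a)) (hc : HasDerivAt c v a) (hfc : ∀ᶠ t in 𝓝 a, f (c t) = t) :
    L v = 1 :=
  (hf.comp_hasDerivAt a hc).unique ((hasDerivAt_id a).congr_of_eventuallyEq hfc)

lemma one_le_of_leftInverse_of_mapsTo_ball {E : Type*} [NormedAddCommGroup E] [NormedSpace ℂ E]
    {f : E → ℂ} {c : ℂ → E} {v : E} {R : ℝ} (hf : DifferentiableOn ℂ f (ball 0 1))
    (hmaps : MapsTo f (ball 0 1) (closedBall (f 0) R)) (hc₀ : c 0 = 0) (hc : HasDerivAt c v 0)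
    (hv : ‖v‖ = 1) (hfc : ∀ᶠ t in 𝓝 0, f (c t) = t) : 1 ≤ R := by
  have hL : fderiv ℂ f 0 v = 1 := by
    refine HasFDerivAt.apply_eq_one_of_leftInverse ?_ hc hfc
    rw [hc₀]
    exact (hf.differentiableAt (ball_mem_nhds 0 one_pos)).hasFDerivAt
  calc 1 = ‖fderiv ℂ f 0 v‖ := by simp [hL]
    _ ≤ ‖fderiv ℂ f 0‖ * ‖v‖ := (fderiv ℂ f 0).le_opNorm v
    _ ≤ R := by simpa [hv] using Complex.norm_fderiv_le_div_of_mapsTo_ball hf hmaps one_pos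

/-- Let `B` be the open unit ball of `ℂ²` for the Hermitian norm and
`V = B ∩ {(x, y) : y = x²}`. Then `V` is not a holomorphic retract of `B`. -/
theorem stmt3
    (B V : Set (EuclideanSpace ℂ (Fin 2)))
    (hB : B = Metric.ball 0 1)
    (hV : V = B ∩ {p : EuclideanSpace ℂ (Fin 2) | p 1 = (p 0) ^ 2}) :
    ¬ ∃ ρ : EuclideanSpace ℂ (Fin 2) → EuclideanSpace ℂ (Fin 2),
        AnalyticOnNhd ℂ ρ B ∧ Set.MapsTo ρ B B ∧
        (∀ z ∈ B, ρ (ρ z) = ρ z) ∧ ρ '' B = V := by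
  rintro ⟨ρ, han, -, hidem, himg⟩
  subst hB hV
  have hfix : ∀ p ∈ ball 0 1 ∩ {p | p 1 = p 0 ^ 2}, ρ p = p := by
    rw [← himg]
    rintro _ ⟨z, hz, rfl⟩
    exact hidem z hz
  set f := fun z => ρ z 0
  have hf_diff : DifferentiableOn ℂ f (ball 0 1) :=
    (EuclideanSpace.proj (𝕜 := ℂ) (0 : Fin 2)).differentiable.comp_differentiableOn
      han.differentiableOn
  have hf_zero : f 0 = 0 := by
    simpa [f] using congr_arg (· 0) (hfix 0 (by simp))
  have hf_maps : MapsTo f (ball 0 1) (closedBall (f 0) (4 / 5)) := by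
    intro z hz
    obtain ⟨hρz, hρz_sq⟩ := himg ▸ mem_image_of_mem ρ hz
    rw [hf_zero, mem_closedBall_zero_iff]
    exact (norm_apply_zero_lt_of_apply_one_eq_sq (mem_ball_zero_iff.mp hρz) hρz_sq).le
  have hf_parabola : ∀ᶠ t in 𝓝 0, f (parabola t) = t := by
    filter_upwards [ball_mem_nhds (0 : ℂ) (by norm_num : (0 : ℝ) < 1 / 2)] with t ht
    have hmem : parabola t ∈ ball 0 1 := mem_ball_zero_iff.mpr
      (norm_parabola_lt_one (mem_ball_zero_iff.mp ht))
    simp [f, hfix _ ⟨hmem, by simp⟩]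
  have := one_le_of_leftInverse_of_mapsTo_ball hf_diff hf_maps (by simp [parabola])
    hasDerivAt_parabola_zero (by simp) hf_parabola
  norm_num at this
end

section
/- Let Δ³ ⊂ ℂ³ be the open unit polydisc (the open unit ball for the sup norm on ℂ³) and let V = Δ³ ∩ {(x, y, z) ∈ ℂ³ : z = x + y}. Then V is not a holomorphic retract of Δ³: there is no holomorphic map ρ : Δ³ → Δ³ with ρ ∘ ρ = ρ on Δ³ and ρ(Δ³) = V. -/
/-!
Since `0 ∈ V`, a retraction `ρ` fixes `0`, so `L = Dρ(0)` is a linear projection onto the plane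
`z = x + y`, and `‖L‖ ≤ 1` by the Schwarz lemma for maps of the polydisc. No such projection exists
for the sup norm: the first coordinate of `L` takes the value `1 ± s` with `s = (L e₃)₀` on the unit
vectors `(1, -1, ±1)`, and `|1 + s|, |1 - s| ≤ 1` forces `s = 0` by the parallelogram law; similarly
for the second coordinate, so `L e₃ = 0` and then `L (1, 1, 0) = (1, 1, 2)`.
-/

open Metric Set Filter Topology

theorem eq_zero_of_norm_add_le_of_norm_sub_le {E : Type*} [NormedAddCommGroup E]
    [InnerProductSpace ℝ E] {x y : E} (h₁ : ‖x + y‖ ≤ ‖x‖) (h₂ : ‖x - y‖ ≤ ‖x‖) : y = 0 := by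
  have := parallelogram_law_with_norm ℝ x y
  have h₁' := pow_le_pow_left₀ (norm_nonneg _) h₁ 2
  have h₂' := pow_le_pow_left₀ (norm_nonneg _) h₂ 2
  rw [← norm_eq_zero, ← sq_eq_zero_iff]
  nlinarith [sq_nonneg ‖y‖]

section Derivatives

variable {𝕜 E F G : Type*} [NontriviallyNormedField 𝕜] [NormedAddCommGroup E] [NormedSpace 𝕜 E]
  [NormedAddCommGroup F] [NormedSpace 𝕜 F] [NormedAddCommGroup G] [NormedSpace 𝕜 G]

theorem HasFDerivAt.apply_eq_self_of_eventually_smul {f : E → E} {L : E →L[𝕜] E} {v : E}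
    (hf : HasFDerivAt f L 0) (h : ∀ᶠ t : 𝕜 in 𝓝 0, f (t • v) = t • v) : L v = v := by
  have hline : HasDerivAt (fun t : 𝕜 => t • v) v 0 := by
    simpa using (hasDerivAt_id (0 : 𝕜)).smul_const v
  have hcomp : HasDerivAt (fun t : 𝕜 => f (t • v)) (L v) 0 :=
    (by simpa using hf : HasFDerivAt f L ((fun t : 𝕜 => t • v) 0)).comp_hasDerivAt 0 hline
  exact hcomp.unique (hline.congr_of_eventuallyEq h)

theorem HasFDerivAt.clm_comp_eq_zero_of_eventually {f : E → F} {L : E →L[𝕜] F} {x : E}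
    (hf : HasFDerivAt f L x) (ψ : F →L[𝕜] G) (h : ∀ᶠ y in 𝓝 x, ψ (f y) = 0) :
    ψ.comp L = 0 :=
  (ψ.hasFDerivAt.comp x hf).unique ((hasFDerivAt_const 0 x).congr_of_eventuallyEq h)

end Derivatives

theorem one_lt_norm_of_projection_onto_plane (L : (Fin 3 → ℂ) →L[ℂ] (Fin 3 → ℂ))
    (hfix : ∀ v : Fin 3 → ℂ, v 2 = v 0 + v 1 → L v = v)
    (hrange : ∀ v, L v 2 = L v 0 + L v 1) : 1 < ‖L‖ := by
  by_contra! hL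
  have hcoord : ∀ u : Fin 3 → ℂ, (∀ j, ‖u j‖ ≤ 1) → ∀ i, ‖L u i‖ ≤ 1 := fun u hu i =>
    calc ‖L u i‖ ≤ ‖L u‖ := norm_le_pi_norm _ i
      _ ≤ 1 * ‖u‖ := L.le_of_opNorm_le hL u
      _ ≤ 1 := by rw [one_mul]; exact (pi_norm_le_iff_of_nonneg zero_le_one).2 hu
  set a : Fin 3 → ℂ := ![1, 0, 1]
  set b : Fin 3 → ℂ := ![0, 1, 1]
  set e : Fin 3 → ℂ := ![0, 0, 1]
  have ha : L a = a := hfix a (by simp [a])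
  have hb : L b = b := hfix b (by simp [b])
  have hkill : ∀ w i, L w i = 1 → (∀ j, ‖(w + e) j‖ ≤ 1) → (∀ j, ‖(w - e) j‖ ≤ 1) →
      L e i = 0 := by
    intro w i hw hadd hsub
    refine eq_zero_of_norm_add_le_of_norm_sub_le (x := L w i) ?_ ?_ <;> rw [hw, norm_one]
    · simpa [hw] using hcoord _ hadd i
    · simpa [hw] using hcoord _ hsub i
  have he0 : L e 0 = 0 := hkill (a - b) 0 (by rw [map_sub, ha, hb]; simp [a, b])
    (by simp [Fin.forall_fin_succ, a, b, e]) (by simp [Fin.forall_fin_succ, a, b, e])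
  have he1 : L e 1 = 0 := hkill (b - a) 1 (by rw [map_sub, ha, hb]; simp [a, b])
    (by simp [Fin.forall_fin_succ, a, b, e]) (by simp [Fin.forall_fin_succ, a, b, e])
  have he2 : L e 2 = 0 := by rw [hrange, he0, he1, add_zero]
  have htwo := hcoord (a + b - (2 : ℂ) • e) (by norm_num [Fin.forall_fin_succ, a, b, e]) 2
  rw [map_sub, map_add, map_smul, ha, hb] at htwo
  simp [he2, a, b] at htwo
  norm_num at htwo

/-- Let `Δ³ ⊂ ℂ³` be the open unit polydisc (open unit ball for the
sup norm on `ℂ³`, here `Fin 3 → ℂ` with the Pi norm) and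
`V = Δ³ ∩ {(x, y, z) : z = x + y}`. Then `V` is not a holomorphic retract of `Δ³`. -/
theorem stmt4
    (D V : Set (Fin 3 → ℂ))
    (hD : D = Metric.ball 0 1)
    (hV : V = D ∩ {p : Fin 3 → ℂ | p 2 = p 0 + p 1}) :
    ¬ ∃ ρ : (Fin 3 → ℂ) → (Fin 3 → ℂ),
        AnalyticOnNhd ℂ ρ D ∧ Set.MapsTo ρ D D ∧
        (∀ z ∈ D, ρ (ρ z) = ρ z) ∧ ρ '' D = V := by
  rintro ⟨ρ, hρ, hmaps, hidem, himage⟩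
  subst hD hV
  have hfixV : ∀ v ∈ ball 0 1 ∩ {p : Fin 3 → ℂ | p 2 = p 0 + p 1}, ρ v = v := by
    rw [← himage]
    rintro _ ⟨w, hw, rfl⟩
    exact hidem w hw
  have hρ0 : ρ 0 = 0 := hfixV 0 (by simp)
  have hball : ball (0 : Fin 3 → ℂ) 1 ∈ 𝓝 0 := ball_mem_nhds 0 one_pos
  have hderiv : HasFDerivAt ρ (fderiv ℂ ρ 0) 0 :=
    (hρ 0 (mem_ball_self one_pos)).differentiableAt.hasFDerivAt
  refine (one_lt_norm_of_projection_onto_plane (fderiv ℂ ρ 0) ?_ ?_).not_ge ?_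
  · intro v hv
    refine hderiv.apply_eq_self_of_eventually_smul ?_
    have hline : Tendsto (fun t : ℂ => t • v) (𝓝 0) (𝓝 0) := by
      simpa using (tendsto_id (x := 𝓝 (0 : ℂ))).smul_const v
    filter_upwards [hline.eventually_mem hball] with t ht
    exact hfixV _ ⟨ht, by simp [hv, mul_add]⟩
  · intro v
    have hrange := hderiv.clm_comp_eq_zero_of_eventually
      (ContinuousLinearMap.proj (R := ℂ) (φ := fun _ : Fin 3 => ℂ) 2 -
        ContinuousLinearMap.proj 0 - ContinuousLinearMap.proj 1) <| by
        filter_upwards [hball] with p hp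
        have hp_plane : ρ p 2 = ρ p 0 + ρ p 1 := (himage ▸ mem_image_of_mem ρ hp).2
        simp [hp_plane]
    simpa [sub_sub, sub_eq_zero] using congrArg (· v) hrange
  · exact Complex.norm_fderiv_le_one_of_mapsTo_ball hρ.differentiableOn
      (by rw [hρ0]; exact hmaps.mono_right ball_subset_closedBall) one_pos
end

section
/- Equip ℂ³ with the sup norm. Let p : ℂ³ → ℂ³ be a linear map with operator norm ‖p‖ ≤ 1 such that p(1,0,1) = (1,0,1) and range p ⊆ {(x, y, z) ∈ ℂ³ : z = x + y}. Then p(0,1,0) = 0. -/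
/-! For `‖t‖ ≤ 1` the vector `(1, t, 1)` has sup norm `1`, so the contraction `p` sends it to
`(1, 0, 1) + t • p (0, 1, 0)`, again of norm at most `1`. In the outer coordinates this says
`‖1 + t * a‖ ≤ 1` for all `‖t‖ ≤ 1`, which forces `a = 0`; the range condition then kills the
middle coordinate. -/

/-- Take `t = ‖a‖ / a` to get `1 + ‖a‖ ≤ 1`. -/
theorem eq_zero_of_forall_norm_one_add_mul_le_one {𝕜 : Type*} [RCLike 𝕜] {a : 𝕜}
    (h : ∀ t : 𝕜, ‖t‖ ≤ 1 → ‖1 + t * a‖ ≤ 1) : a = 0 := by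
  by_contra ha
  have hnorm_a : 0 < ‖a‖ := norm_pos_iff.mpr ha
  have ht : ‖(‖a‖ : 𝕜) / a‖ ≤ 1 := by
    rw [norm_div, RCLike.norm_ofReal, abs_norm, div_self hnorm_a.ne']
  have h₁ := h _ ht
  rw [div_mul_cancel₀ _ ha, ← RCLike.ofReal_one, ← RCLike.ofReal_add, RCLike.norm_ofReal,
    abs_of_pos (by positivity)] at h₁
  linarith

theorem norm_add_smul_map_le_one {𝕜 E : Type*} [NontriviallyNormedField 𝕜]
    [SeminormedAddCommGroup E] [NormedSpace 𝕜 E] {p : E →L[𝕜] E} (hp : ‖p‖ ≤ 1)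
    {u v : E} (hu : p u = u) {t : 𝕜} (ht : ‖u + t • v‖ ≤ 1) : ‖u + t • p v‖ ≤ 1 :=
  calc ‖u + t • p v‖ = ‖p (u + t • v)‖ := by rw [map_add, map_smul, hu]
    _ ≤ ‖p‖ * ‖u + t • v‖ := p.le_opNorm _
    _ ≤ 1 := mul_le_one₀ hp (norm_nonneg _) ht

/-- Equip `ℂ³` with the sup norm. If `p : ℂ³ → ℂ³` is linear with
`‖p‖ ≤ 1`, `p (1,0,1) = (1,0,1)` and `range p ⊆ {(x,y,z) : z = x + y}`,
then `p (0,1,0) = 0`. -/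
theorem stmt6
    (p : (Fin 3 → ℂ) →L[ℂ] (Fin 3 → ℂ)) (hnorm : ‖p‖ ≤ 1)
    (hfix : p ![1, 0, 1] = ![1, 0, 1])
    (hrange : Set.range p ⊆ {v : Fin 3 → ℂ | v 2 = v 0 + v 1}) :
    p ![0, 1, 0] = 0 := by
  set w := p ![0, 1, 0]
  have hbound : ∀ t : ℂ, ‖t‖ ≤ 1 → ‖![1, 0, 1] + t • w‖ ≤ 1 := fun t ht ↦
    norm_add_smul_map_le_one hnorm hfix <| (pi_norm_le_iff_of_nonneg zero_le_one).mpr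
      fun i ↦ by fin_cases i <;> simp [ht]
  have hw : ∀ i, ![(1 : ℂ), 0, 1] i = 1 → w i = 0 := fun i hi ↦
    eq_zero_of_forall_norm_one_add_mul_le_one fun t ht ↦ by
      simpa [hi] using (norm_le_pi_norm _ i).trans (hbound t ht)
  have hw₀ : w 0 = 0 := hw 0 rfl
  have hw₂ : w 2 = 0 := hw 2 rfl
  have hw₁ : w 1 = 0 := by
    have hw_range : w 2 = w 0 + w 1 := hrange ⟨_, rfl⟩
    rwa [hw₀, hw₂, zero_add, eq_comm] at hw_range
  ext i
  fin_cases i <;> assumption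
end

section
/- Let E be a finite-dimensional complex normed vector space with open unit ball B, and let ρ : B → B be a holomorphic map with ρ(0) = 0 and ρ ∘ ρ = ρ on B. Then the derivative ρ'(0) is a continuous linear projection (ρ'(0) ∘ ρ'(0) = ρ'(0)) of operator norm at most 1; and if ρ'(0) ≠ 0 then ‖ρ'(0)‖ = 1. -/
open Filter Metric Topology

theorem IsIdempotentElem.one_le_norm {R : Type*} [NonUnitalNormedRing R] {p : R}
    (hp : IsIdempotentElem p) (hp0 : p ≠ 0) : 1 ≤ ‖p‖ := by
  have hpos : 0 < ‖p‖ := norm_pos_iff.mpr hp0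
  have : ‖p‖ * 1 ≤ ‖p‖ * ‖p‖ := by
    calc ‖p‖ * 1 = ‖p * p‖ := by rw [hp, mul_one]
      _ ≤ ‖p‖ * ‖p‖ := norm_mul_le p p
  exact le_of_mul_le_mul_left this hpos

theorem isIdempotentElem_fderiv_of_comp_self_eventuallyEq {𝕜 E : Type*}
    [NontriviallyNormedField 𝕜] [NormedAddCommGroup E] [NormedSpace 𝕜 E] {f : E → E} {a : E}
    (hf : DifferentiableAt 𝕜 f a) (hfa : f a = a) (hff : f ∘ f =ᶠ[𝓝 a] f) :
    IsIdempotentElem (fderiv 𝕜 f a) := by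
  have hf' : HasFDerivAt f (fderiv 𝕜 f a) (f a) := by rw [hfa]; exact hf.hasFDerivAt
  have hcomp : HasFDerivAt (f ∘ f) ((fderiv 𝕜 f a).comp (fderiv 𝕜 f a)) a :=
    hf'.comp a hf.hasFDerivAt
  exact hcomp.fderiv.symm.trans hff.fderiv_eq

theorem stmt9_general
    {E : Type*} [NormedAddCommGroup E] [NormedSpace ℂ E]
    (B : Set E) (hB : B = Metric.ball 0 1)
    (ρ : E → E) (hρ : AnalyticOnNhd ℂ ρ B) (hmaps : Set.MapsTo ρ B B)
    (hρ0 : ρ 0 = 0) (hidem : ∀ x ∈ B, ρ (ρ x) = ρ x) :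
    (∀ v, fderiv ℂ ρ 0 (fderiv ℂ ρ 0 v) = fderiv ℂ ρ 0 v) ∧
      ‖fderiv ℂ ρ 0‖ ≤ 1 ∧ (fderiv ℂ ρ 0 ≠ 0 → ‖fderiv ℂ ρ 0‖ = 1) := by
  subst hB
  have hB0 : ball (0 : E) 1 ∈ 𝓝 0 := ball_mem_nhds 0 one_pos
  have hproj : IsIdempotentElem (fderiv ℂ ρ 0) :=
    isIdempotentElem_fderiv_of_comp_self_eventuallyEq
      (hρ 0 (mem_ball_self one_pos)).differentiableAt hρ0 (eventually_of_mem hB0 hidem)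
  have hle : ‖fderiv ℂ ρ 0‖ ≤ 1 :=
    Complex.norm_fderiv_le_one_of_mapsTo_ball hρ.differentiableOn
      (by rw [hρ0]; exact hmaps.mono_right ball_subset_closedBall) one_pos
  exact ⟨fun v => congr($hproj v), hle, fun hne => hle.antisymm (hproj.one_le_norm hne)⟩

/-- Let `E` be a finite-dimensional complex normed space with open unit
ball `B`, and `ρ : B → B` holomorphic with `ρ 0 = 0` and `ρ ∘ ρ = ρ` on `B`. Then
`ρ'(0)` is a continuous linear projection of operator norm at most `1`, and if
`ρ'(0) ≠ 0` then `‖ρ'(0)‖ = 1`. -/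
theorem stmt9
    {E : Type*} [NormedAddCommGroup E] [NormedSpace ℂ E] [FiniteDimensional ℂ E]
    (B : Set E) (hB : B = Metric.ball 0 1)
    (ρ : E → E) (hρ : AnalyticOnNhd ℂ ρ B) (hmaps : Set.MapsTo ρ B B)
    (hρ0 : ρ 0 = 0) (hidem : ∀ x ∈ B, ρ (ρ x) = ρ x) :
    (∀ v, fderiv ℂ ρ 0 (fderiv ℂ ρ 0 v) = fderiv ℂ ρ 0 v) ∧
      ‖fderiv ℂ ρ 0‖ ≤ 1 ∧ (fderiv ℂ ρ 0 ≠ 0 → ‖fderiv ℂ ρ 0‖ = 1) :=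
  stmt9_general B hB ρ hρ hmaps hρ0 hidem
end

section
/- Let E be a finite-dimensional complex normed vector space with open unit ball B, and let f : B → B be a holomorphic map with f(0) = 0. Then the Fréchet derivative f'(0) has operator norm at most 1: ‖f'(0)·v‖ ≤ ‖v‖ for all v ∈ E. -/
theorem stmt10_general
    {E : Type*} [NormedAddCommGroup E] [NormedSpace ℂ E]
    (B : Set E) (hB : B = Metric.ball 0 1)
    (f : E → E) (hf : AnalyticOnNhd ℂ f B) (hmaps : Set.MapsTo f B B)
    (hf0 : f 0 = 0) :
    ∀ v : E, ‖fderiv ℂ f 0 v‖ ≤ ‖v‖ := by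
  subst hB
  intro v
  have h_maps : Set.MapsTo f (Metric.ball 0 1) (Metric.closedBall (f 0) 1) := by
    rw [hf0]
    exact hmaps.mono_right Metric.ball_subset_closedBall
  have h_norm : ‖fderiv ℂ f 0‖ ≤ 1 :=
    Complex.norm_fderiv_le_one_of_mapsTo_ball hf.differentiableOn h_maps one_pos
  calc ‖fderiv ℂ f 0 v‖ ≤ ‖fderiv ℂ f 0‖ * ‖v‖ := (fderiv ℂ f 0).le_opNorm v
    _ ≤ ‖v‖ := mul_le_of_le_one_left (norm_nonneg v) h_norm

/-- (Schwarz-type lemma.) Let `E` be a finite-dimensional complex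
normed space with open unit ball `B` and `f : B → B` holomorphic with `f 0 = 0`.
Then `‖f'(0) v‖ ≤ ‖v‖` for all `v ∈ E`. -/
theorem stmt10
    {E : Type*} [NormedAddCommGroup E] [NormedSpace ℂ E] [FiniteDimensional ℂ E]
    (B : Set E) (hB : B = Metric.ball 0 1)
    (f : E → E) (hf : AnalyticOnNhd ℂ f B) (hmaps : Set.MapsTo f B B)
    (hf0 : f 0 = 0) :
    ∀ v : E, ‖fderiv ℂ f 0 v‖ ≤ ‖v‖ :=
  stmt10_general B hB f hf hmaps hf0
end
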